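/- arXiv:2211.08892 — 2 statements merged into one kernel-verified Lean document; each statement's English description precedes it below -/
import Mathlib

section
/- Let (Ω, F, P) be a probability space, n a positive natural number, and U an n×n real matrix. For each t ∈ [0,1], let B_t : Ω → ℝⁿ be a random vector whose components are square-integrable and satisfy E[B_t[h]] = 0 for all h, and E[B_s[h]·B_t[h']] = min(s,t) if h = h' and E[B_s[h]·B_t[h']] = 0 if h ≠ h', for all s, t ∈ [0,1] (the covariance structure of n independent standard Brownian motions). Define the matrix-valued process M_t := U · diag(B_t) · Uᵀ, i.e. M_t[i,j] = Σ_{h=1}^n U[i,h]·B_t[h]·U[j,h]. Then for all t ∈ [0,1] and all indices i, j one has E[M_t[i,j]] = 0, and for all s, t ∈ [0,1] and all indices i, j, k, l one has E[M_s[i,j]·M_t[k,l]] = min(s,t) · K(U)_{i,j,k,l}. -/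
/-!
Each entry of `M_t = U · diag(B_t) · Uᵀ` is the linear combination `∑ₕ U i h · U j h · B_t h` of the
coordinates of `B_t`, so its mean is the same combination of the means, and the second moment of a
product of two entries is a double sum of the cross moments `E[B_s h · B_t h']`. Orthogonality of
the coordinates kills the off-diagonal terms and leaves `min(s,t) · ∑ₕ U i h U j h U k h U l h`.
-/

open MeasureTheory Finset
open scoped Matrix

theorem Matrix.mul_diagonal_mul_transpose_apply {m n ι R : Type*} [Fintype ι] [DecidableEq ι]
    [NonUnitalNonAssocSemiring R] (A : Matrix m ι R) (B : Matrix n ι R) (d : ι → R)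
    (i : m) (j : n) :
    (A * Matrix.diagonal d * Bᵀ) i j = ∑ h, A i h * d h * B j h := by
  rw [Matrix.mul_apply]
  simp only [Matrix.mul_diagonal, Matrix.transpose_apply]

section

variable {Ω m n ι : Type*} [MeasurableSpace Ω] {P : Measure Ω} [Fintype ι] [DecidableEq ι]

theorem integral_mul_diagonal_mul_transpose_apply (A : Matrix m ι ℝ) (B : Matrix n ι ℝ)
    {X : Ω → ι → ℝ} (hX : ∀ h, Integrable (fun ω ↦ X ω h) P) (i : m) (j : n) :
    ∫ ω, (A * Matrix.diagonal (X ω) * Bᵀ) i j ∂P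
      = (A * Matrix.diagonal (fun h ↦ ∫ ω, X ω h ∂P) * Bᵀ) i j := by
  simp_rw [Matrix.mul_diagonal_mul_transpose_apply]
  rw [integral_finsetSum _ fun h _ ↦ ((hX h).const_mul _).mul_const _]
  simp only [integral_mul_const, integral_const_mul]

theorem integral_mul_diagonal_mul_transpose_apply_mul {p q : Type*}
    (A : Matrix m ι ℝ) (B : Matrix n ι ℝ) (C : Matrix p ι ℝ) (D : Matrix q ι ℝ)
    {X Y : Ω → ι → ℝ} (hXY : ∀ h h', Integrable (fun ω ↦ X ω h * Y ω h') P)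
    (i : m) (j : n) (k : p) (l : q) :
    ∫ ω, (A * Matrix.diagonal (X ω) * Bᵀ) i j * (C * Matrix.diagonal (Y ω) * Dᵀ) k l ∂P
      = ∑ h, ∑ h', A i h * B j h * (C k h' * D l h') * ∫ ω, X ω h * Y ω h' ∂P := by
  have hexpand : ∀ ω, (A * Matrix.diagonal (X ω) * Bᵀ) i j * (C * Matrix.diagonal (Y ω) * Dᵀ) k l
      = ∑ h, ∑ h', A i h * B j h * (C k h' * D l h') * (X ω h * Y ω h') := fun ω ↦ by
    simp only [Matrix.mul_diagonal_mul_transpose_apply, Fintype.sum_mul_sum]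
    exact sum_congr rfl fun h _ ↦ sum_congr rfl fun h' _ ↦ by ring
  simp_rw [hexpand]
  rw [integral_finsetSum _ fun h _ ↦ integrable_finsetSum _ fun h' _ ↦ (hXY h h').const_mul _]
  refine sum_congr rfl fun h _ ↦ ?_
  rw [integral_finsetSum _ fun h' _ ↦ (hXY h h').const_mul _]
  simp only [integral_const_mul]

theorem integral_mul_diagonal_mul_transpose_apply_mul_of_orthogonal {p q : Type*}
    (A : Matrix m ι ℝ) (B : Matrix n ι ℝ) (C : Matrix p ι ℝ) (D : Matrix q ι ℝ)
    {X Y : Ω → ι → ℝ} (hXY : ∀ h h', Integrable (fun ω ↦ X ω h * Y ω h') P) {c : ℝ}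
    (horth : ∀ h h', ∫ ω, X ω h * Y ω h' ∂P = if h = h' then c else 0)
    (i : m) (j : n) (k : p) (l : q) :
    ∫ ω, (A * Matrix.diagonal (X ω) * Bᵀ) i j * (C * Matrix.diagonal (Y ω) * Dᵀ) k l ∂P
      = c * ∑ h, A i h * B j h * C k h * D l h := by
  simp only [integral_mul_diagonal_mul_transpose_apply_mul A B C D hXY, horth, mul_ite, mul_zero,
    sum_ite_eq, mem_univ, if_true, mul_sum]
  exact sum_congr rfl fun h _ ↦ by ring

end

theorem spectral_noise_mean_and_covariance_general
    {Ω : Type*} [MeasurableSpace Ω] (P : Measure Ω) [IsProbabilityMeasure P]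
    (n : ℕ) (U : Matrix (Fin n) (Fin n) ℝ)
    (B : ℝ → Ω → Fin n → ℝ)
    (hL2 : ∀ t ∈ Set.Icc (0:ℝ) 1, ∀ h : Fin n, MemLp (fun ω => B t ω h) 2 P)
    (hmean : ∀ t ∈ Set.Icc (0:ℝ) 1, ∀ h : Fin n, ∫ ω, B t ω h ∂P = 0)
    (hcov : ∀ s ∈ Set.Icc (0:ℝ) 1, ∀ t ∈ Set.Icc (0:ℝ) 1, ∀ h h' : Fin n,
      ∫ ω, B s ω h * B t ω h' ∂P = if h = h' then min s t else 0)
    (M : ℝ → Ω → Matrix (Fin n) (Fin n) ℝ)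
    (hM : ∀ t ω, M t ω = U * Matrix.diagonal (B t ω) * U.transpose) :
    (∀ t ∈ Set.Icc (0:ℝ) 1, ∀ i j : Fin n, ∫ ω, M t ω i j ∂P = 0) ∧
    (∀ s ∈ Set.Icc (0:ℝ) 1, ∀ t ∈ Set.Icc (0:ℝ) 1, ∀ i j k l : Fin n,
      ∫ ω, M s ω i j * M t ω k l ∂P =
        min s t * ∑ h : Fin n, U i h * U j h * U k h * U l h) := by
  refine ⟨fun t ht i j ↦ ?_, fun s hs t ht i j k l ↦ ?_⟩
  · simp_rw [hM, integral_mul_diagonal_mul_transpose_apply U U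
      (fun h ↦ (hL2 t ht h).integrable one_le_two), hmean t ht]
    simp
  · simp_rw [hM]
    exact integral_mul_diagonal_mul_transpose_apply_mul_of_orthogonal U U U U
      (fun h h' ↦ (hL2 s hs h).integrable_mul (hL2 t ht h')) (hcov s hs t ht) i j k l

/-- The covariance-kernel computation at the core of Proposition 1:
the spectral noise process `M_t = U · diag(B_t) · Uᵀ` is centered with covariance
`min(s,t) · K(U)`. -/
theorem spectral_noise_mean_and_covariance
    {Ω : Type*} [MeasurableSpace Ω] (P : Measure Ω) [IsProbabilityMeasure P]
    (n : ℕ) (hn : 0 < n) (U : Matrix (Fin n) (Fin n) ℝ)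
    (B : ℝ → Ω → Fin n → ℝ)
    (hL2 : ∀ t ∈ Set.Icc (0:ℝ) 1, ∀ h : Fin n, MemLp (fun ω => B t ω h) 2 P)
    (hmean : ∀ t ∈ Set.Icc (0:ℝ) 1, ∀ h : Fin n, ∫ ω, B t ω h ∂P = 0)
    (hcov : ∀ s ∈ Set.Icc (0:ℝ) 1, ∀ t ∈ Set.Icc (0:ℝ) 1, ∀ h h' : Fin n,
      ∫ ω, B s ω h * B t ω h' ∂P = if h = h' then min s t else 0)
    (M : ℝ → Ω → Matrix (Fin n) (Fin n) ℝ)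
    (hM : ∀ t ω, M t ω = U * Matrix.diagonal (B t ω) * U.transpose) :
    (∀ t ∈ Set.Icc (0:ℝ) 1, ∀ i j : Fin n, ∫ ω, M t ω i j ∂P = 0) ∧
    (∀ s ∈ Set.Icc (0:ℝ) 1, ∀ t ∈ Set.Icc (0:ℝ) 1, ∀ i j k l : Fin n,
      ∫ ω, M s ω i j * M t ω k l ∂P =
        min s t * ∑ h : Fin n, U i h * U j h * U k h * U l h) :=
  spectral_noise_mean_and_covariance_general P n U B hL2 hmean hcov M hM
end

section
/- Let p, m, N be positive natural numbers with N ≥ 1, let s : ℝᵖ → ℝᵐ (Euclidean spaces with the standard inner product), let y ∈ ℝᵐ, let θ ∈ ℝᵖ, and suppose s has Fréchet derivative J at θ (HasFDerivAt s J θ, where J : ℝᵖ → ℝᵐ is a continuous linear map). Define the score-matching loss f : ℝᵖ → ℝ by f(θ') = (1/N)·‖s(θ') − y‖². Let λ > 0 and assume the tangent kernel lower bound: for every v ∈ ℝᵐ, ‖J* v‖² ≥ λ·‖v‖², where J* denotes the adjoint of J. Then f is differentiable at θ with gradient ∇f(θ) = (2/N)·J*(s(θ) − y), and the Polyak–Łojasiewicz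 inequality ‖∇f(θ)‖² ≥ (λ/N)·f(θ) holds. -/
/-! With `v = s θ - y`, the chain rule gives `∇f(θ) = (2/N) J* v`, and the kernel bound at `v`
gives `(λ/N) f(θ) = λ‖v‖²/N² ≤ ‖J* v‖²/N² ≤ 4‖J* v‖²/N² = ‖∇f(θ)‖²`. -/

theorem HasGradientAt.const_mul {E : Type*} [NormedAddCommGroup E] [InnerProductSpace ℝ E]
    [CompleteSpace E] {f : E → ℝ} {g x : E} (hf : HasGradientAt f g x) (c : ℝ) :
    HasGradientAt (fun y => c * f y) (c • g) x := by
  rw [hasGradientAt_iff_hasFDerivAt] at hf ⊢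
  simpa [map_smul] using hf.const_mul c

theorem HasFDerivAt.hasGradientAt_norm_sub_sq {E F : Type*} [NormedAddCommGroup E]
    [InnerProductSpace ℝ E] [CompleteSpace E] [NormedAddCommGroup F] [InnerProductSpace ℝ F]
    [CompleteSpace F] {s : E → F} {J : E →L[ℝ] F} {θ : E}
    (hs : HasFDerivAt s J θ) (y : F) :
    HasGradientAt (fun x => ‖s x - y‖ ^ 2)
      ((2 : ℝ) • ContinuousLinearMap.adjoint J (s θ - y)) θ := by
  rw [hasGradientAt_iff_hasFDerivAt]
  refine (hs.sub_const y).norm_sq.congr_fderiv ?_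
  ext x
  simp [ContinuousLinearMap.adjoint_inner_left]

theorem div_mul_one_div_mul_le_norm_two_div_smul_sq {F : Type*} [NormedAddCommGroup F]
    [NormedSpace ℝ F] {lam a : ℝ} {w : F} (h : lam * a ≤ ‖w‖ ^ 2) (N : ℝ) :
    lam / N * (1 / N * a) ≤ ‖(2 / N) • w‖ ^ 2 := by
  rw [norm_smul, mul_pow, Real.norm_eq_abs, sq_abs, div_pow]
  have h_le_four : lam * a ≤ 2 ^ 2 * ‖w‖ ^ 2 := by nlinarith [sq_nonneg ‖w‖]
  calc lam / N * (1 / N * a) = lam * a / N ^ 2 := by ring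
    _ ≤ 2 ^ 2 * ‖w‖ ^ 2 / N ^ 2 := by gcongr
    _ = 2 ^ 2 / N ^ 2 * ‖w‖ ^ 2 := by ring

theorem tangent_kernel_implies_PL_general
    (p m N : ℕ)
    (s : EuclideanSpace ℝ (Fin p) → EuclideanSpace ℝ (Fin m))
    (y : EuclideanSpace ℝ (Fin m)) (θ : EuclideanSpace ℝ (Fin p))
    (J : EuclideanSpace ℝ (Fin p) →L[ℝ] EuclideanSpace ℝ (Fin m))
    (hJ : HasFDerivAt s J θ)
    (f : EuclideanSpace ℝ (Fin p) → ℝ)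
    (hf : ∀ θ', f θ' = (1 / (N : ℝ)) * ‖s θ' - y‖^2)
    (lam : ℝ)
    (hker : ∀ v : EuclideanSpace ℝ (Fin m),
      lam * ‖v‖^2 ≤ ‖(ContinuousLinearMap.adjoint J) v‖^2) :
    HasGradientAt f ((2 / (N : ℝ)) • (ContinuousLinearMap.adjoint J) (s θ - y)) θ ∧
    (lam / (N : ℝ)) * f θ ≤ ‖(2 / (N : ℝ)) • (ContinuousLinearMap.adjoint J) (s θ - y)‖^2 := by
  obtain rfl : f = fun θ' => 1 / (N : ℝ) * ‖s θ' - y‖ ^ 2 := funext hf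
  refine ⟨?_, div_mul_one_div_mul_le_norm_two_div_smul_sq (hker _) N⟩
  convert (hJ.hasGradientAt_norm_sub_sq y).const_mul (1 / (N : ℝ)) using 1
  rw [smul_smul, one_div_mul_eq_div]

/-- A lower bound on the least eigenvalue of the tangent kernel implies the
Polyak–Łojasiewicz inequality for the score-matching loss `f(θ') = (1/N)‖s(θ') − y‖²`. -/
theorem tangent_kernel_implies_PL
    (p m N : ℕ) (hp : 0 < p) (hm : 0 < m) (hN : 1 ≤ N)
    (s : EuclideanSpace ℝ (Fin p) → EuclideanSpace ℝ (Fin m))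
    (y : EuclideanSpace ℝ (Fin m)) (θ : EuclideanSpace ℝ (Fin p))
    (J : EuclideanSpace ℝ (Fin p) →L[ℝ] EuclideanSpace ℝ (Fin m))
    (hJ : HasFDerivAt s J θ)
    (f : EuclideanSpace ℝ (Fin p) → ℝ)
    (hf : ∀ θ', f θ' = (1 / (N : ℝ)) * ‖s θ' - y‖^2)
    (lam : ℝ) (hlam : 0 < lam)
    (hker : ∀ v : EuclideanSpace ℝ (Fin m),
      lam * ‖v‖^2 ≤ ‖(ContinuousLinearMap.adjoint J) v‖^2) :
    HasGradientAt f ((2 / (N : ℝ)) • (ContinuousLinearMap.adjoint J) (s θ - y)) θ ∧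
    (lam / (N : ℝ)) * f θ ≤ ‖(2 / (N : ℝ)) • (ContinuousLinearMap.adjoint J) (s θ - y)‖^2 :=
  tangent_kernel_implies_PL_general p m N s y θ J hJ f hf lam hker
end
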